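/- arXiv:2412.10013 — 3 statements merged into one kernel-verified Lean document; each statement's English description precedes it below -/
import Mathlib

section
/- For all nonnegative integers $k, l, m, n$, one has $P_{k,l}(m,n) = \binom{m+k}{l}$, i.e. $\sum_{i=0}^{n}(-1)^i\binom{n}{i}\binom{m+n-i+k}{n+l} = \binom{m+k}{l}$. -/
/-- `P k l m n = ∑_{i=0}^{n} (-1)^i * C(n,i) * C(m+n-i+k, n+l)`, as an integer. -/
def P (k l m n : ℕ) : ℤ :=
  ∑ i ∈ Finset.range (n + 1),
    (-1 : ℤ) ^ i * (n.choose i : ℤ) * ((m + n - i + k).choose (n + l) : ℤ)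

lemma hL (k l m n : ℕ) : (∑ i ∈ Finset.range (n + 1 + 1),
      (-1 : ℤ) ^ i * ((n+1).choose i : ℤ) * ((m + (n+1) - i + k).choose ((n+1) + l) : ℤ))
      = ((m + n + 1 + k).choose (n + l + 1) : ℤ)
          - (∑ i ∈ Finset.range (n+1), (-1:ℤ)^i * (n.choose i : ℤ) * ((m + n - i + k).choose (n + l + 1) : ℤ))
          - (∑ i ∈ Finset.range (n+1), (-1:ℤ)^i * (n.choose (i+1) : ℤ) * ((m + n - i + k).choose (n + l + 1) : ℤ)) := by
  rw [Finset.sum_range_succ' _ (n+1)]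
  have h1 : ∀ i, m + (n+1) - (i+1) = m + n - i := by intro i; omega
  have h2 : (n+1) + l = n + l + 1 := by ring
  have h3 : m + (n+1) - 0 + k = m + n + 1 + k := by omega
  simp only [h1, h2, h3, Nat.choose_succ_succ, Nat.succ_eq_add_one, pow_succ, pow_zero,
    Nat.choose_zero_right, Nat.cast_one, one_mul]
  push_cast
  have hsum : ∑ x ∈ Finset.range (n + 1), (-1:ℤ) ^ x * -1 * ((n.choose x : ℤ) + (n.choose (x+1) : ℤ)) * ((m + n - x + k).choose (n + l + 1) : ℤ)
      = ∑ x ∈ Finset.range (n + 1), (-((-1:ℤ)^x * (n.choose x : ℤ) * ((m + n - x + k).choose (n + l + 1) : ℤ)) + -((-1:ℤ)^x * (n.choose (x+1) : ℤ) * ((m + n - x + k).choose (n + l + 1) : ℤ))) :=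
    Finset.sum_congr rfl (fun x _ => by ring)
  rw [hsum, Finset.sum_add_distrib]
  rw [Finset.sum_neg_distrib, Finset.sum_neg_distrib]
  ring

lemma hT (k l m n : ℕ) : (∑ i ∈ Finset.range (n+1), (-1:ℤ)^i * (n.choose i : ℤ) * ((m + n + 1 - i + k).choose (n+l+1) : ℤ))
    = ((m+n+1+k).choose (n+l+1) : ℤ) - ∑ i ∈ Finset.range (n+1), (-1:ℤ)^i * (n.choose (i+1) : ℤ) * ((m+n-i+k).choose (n+l+1) : ℤ) := by
  rw [Finset.sum_range_succ' _ n, Finset.sum_range_succ _ n]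
  have h1 : ∀ i, m + n + 1 - (i+1) = m + n - i := fun i => by omega
  have h2 : m + n + 1 - 0 + k = m + n + 1 + k := by omega
  simp only [h1, h2, Nat.choose_succ_self, Nat.cast_zero, mul_zero, zero_mul, add_zero,
    pow_succ, pow_zero, one_mul, Nat.choose_zero_right, Nat.cast_one]
  have hsum : ∑ i ∈ Finset.range n, (-1:ℤ)^i * -1 * (n.choose (i+1) : ℤ) * ((m+n-i+k).choose (n+l+1) : ℤ)
      = ∑ i ∈ Finset.range n, -((-1:ℤ)^i * (n.choose (i+1) : ℤ) * ((m+n-i+k).choose (n+l+1) : ℤ)) :=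
    Finset.sum_congr rfl (fun x _ => by ring)
  rw [hsum, Finset.sum_neg_distrib]
  ring

lemma P_step (k l m n : ℕ) : P k l m (n + 1) = P k l m n := by
  have hpas : ∀ a b : ℕ, ((a.choose b : ℤ)) = ((a+1).choose (b+1) : ℤ) - (a.choose (b+1) : ℤ) := by
    intro a b
    rw [Nat.choose_succ_succ]
    push_cast
    ring
  have hR : P k l m n = (∑ i ∈ Finset.range (n+1), (-1:ℤ)^i * (n.choose i : ℤ) * ((m + n + 1 - i + k).choose (n+l+1) : ℤ))
      - ∑ i ∈ Finset.range (n+1), (-1:ℤ)^i * (n.choose i : ℤ) * ((m+n-i+k).choose (n+l+1) : ℤ) := by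
    unfold P
    rw [← Finset.sum_sub_distrib]
    refine Finset.sum_congr rfl (fun i hi => ?_)
    have hi' : i ≤ n := by simpa using Nat.lt_succ_iff.mp (Finset.mem_range.mp hi)
    have h4 : m + n - i + k + 1 = m + n + 1 - i + k := by omega
    rw [hpas (m + n - i + k) (n + l), h4]
    ring
  rw [hR, hT]
  exact (hL k l m n).trans (by ring)

theorem P_eq_choose (k l m n : ℕ) : P k l m n = ((m + k).choose l : ℤ) := by
  induction n with
  | zero => simp [P]
  | succ n ih => rw [P_step, ih]
end

section
/- For all nonnegative integers $m, n$, one has the recurrence $P_{0,0}(m+1,n+1) = P_{0,0}(m,n+1) - P_{0,0}(m,n) + P_{0,0}(m+1,n)$. -/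
lemma P_zero_zero_eq_one (m n : ℕ) : P 0 0 m n = 1 := by
  induction n with
  | zero => simp [P]
  | succ n ih =>
    rw [← ih]
    unfold P
    rw [Finset.sum_range_succ']
    set F : ℕ → ℤ := fun i => (-1) ^ i * (n.choose i : ℤ) * ((m + n + 1 - i).choose (n + 1) : ℤ)
      with hF
    have main : ∀ i ∈ Finset.range (n + 1),
        ((-1 : ℤ) ^ (i + 1) * ((n + 1).choose (i + 1) : ℤ) *
          ((m + (n + 1) - (i + 1) + 0).choose (n + 1 + 0) : ℤ)
          - (-1 : ℤ) ^ i * (n.choose i : ℤ) * ((m + n - i + 0).choose (n + 0) : ℤ))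
        = F (i + 1) - F i := by
      intro i hi
      rw [Finset.mem_range] at hi
      have h1 : m + (n + 1) - (i + 1) + 0 = m + n - i := by omega
      have h2 : m + n + 1 - (i + 1) = m + n - i := by omega
      have h3 : m + n + 1 - i = (m + n - i) + 1 := by omega
      simp only [hF, h1, h2, h3, add_zero, Nat.choose_succ_succ]
      push_cast
      ring
    have tele : ∑ i ∈ Finset.range (n + 1), (F (i + 1) - F i) = F (n + 1) - F 0 :=
      Finset.sum_range_sub F (n + 1)
    have hsub : (∑ i ∈ Finset.range (n + 1),
          (-1 : ℤ) ^ (i + 1) * ((n + 1).choose (i + 1) : ℤ) *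
            ((m + (n + 1) - (i + 1) + 0).choose (n + 1 + 0) : ℤ))
        - (∑ i ∈ Finset.range (n + 1),
          (-1 : ℤ) ^ i * (n.choose i : ℤ) * ((m + n - i + 0).choose (n + 0) : ℤ))
        = F (n + 1) - F 0 := by
      rw [← Finset.sum_sub_distrib, ← tele]
      exact Finset.sum_congr rfl main
    have hFn : F (n + 1) = 0 := by
      simp [hF, Nat.choose_succ_self]
    have hF0 : F 0 = ((m + n + 1).choose (n + 1) : ℤ) := by simp [hF]
    rw [hFn] at hsub
    have hpeel : ((-1 : ℤ) ^ 0 * ((n + 1).choose 0 : ℤ) *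
        ((m + (n + 1) - 0 + 0).choose (n + 1 + 0) : ℤ)) = F 0 := by
      simp [hF, Nat.add_sub_cancel]
      ring_nf
    rw [hpeel]
    linarith [hsub]

theorem P_zero_zero_rec (m n : ℕ) :
    P 0 0 (m + 1) (n + 1) = P 0 0 m (n + 1) - P 0 0 m n + P 0 0 (m + 1) n := by
  rw [P_zero_zero_eq_one, P_zero_zero_eq_one, P_zero_zero_eq_one, P_zero_zero_eq_one]
  ring
end

section
/- For all nonnegative integers $l, m, n$, one has the recurrence $P_{0,l+1}(m+1,n+1) = P_{0,l}(m,n) + P_{0,l+1}(m,n+1)$. -/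
theorem P_zero_l_rec (l m n : ℕ) :
    P 0 (l + 1) (m + 1) (n + 1) = P 0 l m n + P 0 (l + 1) m (n + 1) := by
  unfold P
  simp only [add_zero]
  have key1 : ∑ i ∈ Finset.range (n + 1 + 1),
      (-1:ℤ)^i * ((n+1).choose i : ℤ) * (((m + 1) + (n+1) - i).choose (n+1+(l+1)) : ℤ) =
      (∑ i ∈ Finset.range (n + 1 + 1),
        (-1:ℤ)^i * ((n+1).choose i : ℤ) * ((m + (n+1) - i).choose (n+1+(l+1)) : ℤ)) +
      (∑ i ∈ Finset.range (n + 1 + 1),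
        (-1:ℤ)^i * ((n+1).choose i : ℤ) * ((m + (n+1) - i).choose (n+l+1) : ℤ)) := by
    rw [← Finset.sum_add_distrib]
    apply Finset.sum_congr rfl
    intro i hi
    have hin : i ≤ n + 1 := by
      simpa [Nat.lt_succ_iff] using Finset.mem_range.mp hi
    have h1 : (m + 1) + (n+1) - i = (m + (n+1) - i) + 1 := by omega
    have h2 : n + 1 + (l + 1) = (n + l + 1) + 1 := by ring
    rw [h1, h2, Nat.choose_succ_succ]
    push_cast
    ring
  -- key2 : the extra sum equals P 0 l m n
  have key2 : ∑ i ∈ Finset.range (n + 1 + 1),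
      (-1:ℤ)^i * ((n+1).choose i : ℤ) * ((m + (n+1) - i).choose (n+l+1) : ℤ) =
      ∑ i ∈ Finset.range (n + 1),
        (-1:ℤ)^i * (n.choose i : ℤ) * ((m + n - i).choose (n + l) : ℤ) := by
    rw [Finset.sum_range_succ']
    -- S = ∑_{i<n+1} f(i+1) + f 0
    have hT : ∑ j ∈ Finset.range (n + 1 + 1),
        (-1:ℤ)^j * (n.choose j : ℤ) * ((m + n + 1 - j).choose (n+l+1) : ℤ) =
        (∑ i ∈ Finset.range (n + 1),
          (-1:ℤ)^(i+1) * (n.choose (i+1) : ℤ) * ((m + n - i).choose (n+l+1) : ℤ)) +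
        ((m + n + 1).choose (n+l+1) : ℤ) := by
      rw [Finset.sum_range_succ']
      congr 1
      · apply Finset.sum_congr rfl
        intro i hi
        have h : m + n + 1 - (i+1) = m + n - i := by omega
        rw [h]
      · norm_num
    have hT' : ∑ j ∈ Finset.range (n + 1 + 1),
        (-1:ℤ)^j * (n.choose j : ℤ) * ((m + n + 1 - j).choose (n+l+1) : ℤ) =
        ∑ j ∈ Finset.range (n + 1),
        (-1:ℤ)^j * (n.choose j : ℤ) * ((m + n + 1 - j).choose (n+l+1) : ℤ) := by
      rw [Finset.sum_range_succ, Nat.choose_succ_self]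
      simp
    have step : ∑ i ∈ Finset.range (n + 1),
        (-1:ℤ)^(i+1) * ((n+1).choose (i+1) : ℤ) * ((m + (n+1) - (i+1)).choose (n+l+1) : ℤ) =
        (∑ i ∈ Finset.range (n + 1),
          (-1:ℤ)^(i+1) * (n.choose i : ℤ) * ((m + n - i).choose (n+l+1) : ℤ)) +
        (∑ i ∈ Finset.range (n + 1),
          (-1:ℤ)^(i+1) * (n.choose (i+1) : ℤ) * ((m + n - i).choose (n+l+1) : ℤ)) := by
      rw [← Finset.sum_add_distrib]
      apply Finset.sum_congr rfl
      intro i hi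
      have h3 : m + (n+1) - (i+1) = m + n - i := by omega
      rw [h3, Nat.choose_succ_succ]
      push_cast
      ring
    rw [step]
    have hfin : ∀ i ∈ Finset.range (n + 1),
        (-1:ℤ)^(i+1) * (n.choose i : ℤ) * ((m + n - i).choose (n+l+1) : ℤ) +
        (-1:ℤ)^i * (n.choose i : ℤ) * ((m + n + 1 - i).choose (n+l+1) : ℤ) =
        (-1:ℤ)^i * (n.choose i : ℤ) * ((m + n - i).choose (n + l) : ℤ) := by
      intro i hi
      have hin : i ≤ n := by
        simpa [Nat.lt_succ_iff] using Finset.mem_range.mp hi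
      have h4 : m + n + 1 - i = (m + n - i) + 1 := by omega
      rw [h4, show n + l + 1 = (n + l) + 1 from rfl, Nat.choose_succ_succ]
      push_cast
      ring
    have hsum := Finset.sum_congr rfl hfin
    rw [Finset.sum_add_distrib] at hsum
    have hf0 : ((-1:ℤ))^0 * (((n+1).choose 0 : ℕ) : ℤ) *
        (((m + (n+1) - 0).choose (n+l+1) : ℕ) : ℤ) = (((m+n+1).choose (n+l+1) : ℕ) : ℤ) := by
      have h : m + (n+1) - 0 = m + n + 1 := by omega
      rw [h]; norm_num
    linarith [hT, hT', hsum, hf0]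
  rw [key1, key2]
  ring
end
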